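/- arXiv:2406.19854 — 4 statements merged into one kernel-verified Lean document; each statement's English description precedes it below -/
import Mathlib

section
/- If X is a finite connected groupoid (a symmetric set with X_1 finite, connected, for which 𝓔_T is a bijection for every n ≥ 1 and every spine T of [n]) and x ∈ X_0 is any object, then p(X) + 1 = |hom(x,x)| × |X_0|, where hom(x,x) denotes the set of edges with both domain and codomain x. -/
/-!
In a groupoid a 2-simplex `z` is determined by its edge `z₀₁` together with either `z₁₂` (the
path spine `0 - 1 - 2`) or `z₀₂` (the star spine `1 - 0 - 2`), and every compatible pair occurs.
So for an edge `g : a → b`, the 2-simplices with `z₀₁ = g` and last vertex `c` are in bijection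
both with `hom(b, c)` and with `hom(a, c)`. Together with edge reversal and connectedness this
makes `|hom(a, c)|` independent of `a` and `c`; hence every object is the domain of exactly
`|hom(x, x)| · |X₀|` edges, one of which is its identity.
-/


/-- A symmetric (simplicial) set: a functor `Υᵒᵖ → Set`, where `Υ` has objects
`[n] = {0,…,n}` (encoded as `Fin (n+1)`) and all functions as morphisms.
For `α : [m] → [n]` and `x ∈ X_n`, `act α x` is `x · α ∈ X_m`. -/
structure SymSet where
  obj : ℕ → Type
  act : ∀ {m n : ℕ}, (Fin (m + 1) → Fin (n + 1)) → obj n → obj m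
  act_id : ∀ {n : ℕ} (x : obj n), act id x = x
  act_comp : ∀ {m n k : ℕ} (α : Fin (m + 1) → Fin (n + 1)) (β : Fin (n + 1) → Fin (k + 1))
      (x : obj k), act α (act β x) = act (β ∘ α) x

namespace SymSet

/-- `x_{ij} ∈ X_1`, the action on `x ∈ X_n` of the map `[1] → [n]` with `0 ↦ i`, `1 ↦ j`. -/
def edge (X : SymSet) {n : ℕ} (i j : Fin (n + 1)) (x : X.obj n) : X.obj 1 :=
  X.act (fun t : Fin 2 => if t = 0 then i else j) x

/-- The domain of an edge, its image under `ι₀ : [0] → [1]`, `0 ↦ 0`. -/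
def edgeDom (X : SymSet) (f : X.obj 1) : X.obj 0 :=
  X.act (fun _ : Fin 1 => (0 : Fin 2)) f

/-- The codomain of an edge, its image under `ι₁ : [0] → [1]`, `0 ↦ 1`. -/
def edgeCod (X : SymSet) (f : X.obj 1) : X.obj 0 :=
  X.act (fun _ : Fin 1 => (1 : Fin 2)) f

/-- The identity edge `id_a` on an object `a ∈ X_0`, induced by the unique map `[1] → [0]`. -/
def identityEdge (X : SymSet) (a : X.obj 0) : X.obj 1 :=
  X.act (fun _ : Fin 2 => (0 : Fin 1)) a

/-- An edge is an identity if it is in the image of `X_0 → X_1`. -/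
def IsIdentityEdge (X : SymSet) (f : X.obj 1) : Prop :=
  ∃ a : X.obj 0, f = X.identityEdge a

/-- The tuple of edges `x_{ij}` (for `i < j` an edge `{i,j}` of the spine `T`)
associated to an `n`-simplex `x`. -/
def spineTuple (X : SymSet) {n : ℕ} (T : SimpleGraph (Fin (n + 1))) (x : X.obj n) :
    ∀ i j : Fin (n + 1), i < j → T.Adj i j → X.obj 1 :=
  fun i j _ _ => X.edge i j x

/-- Membership in `lim_T X`: the components have matching endpoints. -/
def IsSpineLim (X : SymSet) {n : ℕ} (T : SimpleGraph (Fin (n + 1)))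
    (e : ∀ i j : Fin (n + 1), i < j → T.Adj i j → X.obj 1) : Prop :=
  ∃ v : Fin (n + 1) → X.obj 0, ∀ (i j : Fin (n + 1)) (hlt : i < j) (h : T.Adj i j),
    X.edgeDom (e i j hlt h) = v i ∧ X.edgeCod (e i j hlt h) = v j

/-- The limit `lim_T X` of the diagram associated to a spine `T`. -/
def SpineLim (X : SymSet) {n : ℕ} (T : SimpleGraph (Fin (n + 1))) : Type :=
  { e : ∀ i j : Fin (n + 1), i < j → T.Adj i j → X.obj 1 // X.IsSpineLim T e }

lemma spineTuple_isSpineLim (X : SymSet) {n : ℕ} (T : SimpleGraph (Fin (n + 1)))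
    (x : X.obj n) : X.IsSpineLim T (X.spineTuple T x) := by
  refine ⟨fun i => X.act (fun _ : Fin 1 => i) x, fun i j hlt h => ⟨?_, ?_⟩⟩
  · show X.act _ (X.act _ x) = _
    rw [X.act_comp]
    show X.act ((fun t : Fin 2 => if t = 0 then i else j) ∘ fun _ : Fin 1 => 0) x
      = X.act (fun _ : Fin 1 => i) x
    congr 1
  · show X.act _ (X.act _ x) = _
    rw [X.act_comp]
    show X.act ((fun t : Fin 2 => if t = 0 then i else j) ∘ fun _ : Fin 1 => 1) x
      = X.act (fun _ : Fin 1 => j) x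
    congr 1

/-- The map `𝓔_T : X_n → lim_T X`. -/
def spineMap (X : SymSet) {n : ℕ} (T : SimpleGraph (Fin (n + 1))) (x : X.obj n) :
    X.SpineLim T :=
  ⟨X.spineTuple T x, X.spineTuple_isSpineLim T x⟩

/-- A symmetric set is *spiny* if `𝓔_T` is injective for every `n ≥ 1` and
every spine `T` of `[n]` (a tree with vertex set `[n]`). -/
def Spiny (X : SymSet) : Prop :=
  ∀ n : ℕ, 1 ≤ n → ∀ T : SimpleGraph (Fin (n + 1)), T.IsTree →
    Function.Injective (X.spineMap T)

/-- An element `x ∈ X_n` is degenerate if `x = y · σ` for some noninvertible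
surjection `σ : [n] → [k]`. -/
def Degenerate (X : SymSet) {n : ℕ} (x : X.obj n) : Prop :=
  ∃ (k : ℕ) (σ : Fin (n + 1) → Fin (k + 1)) (y : X.obj k),
    Function.Surjective σ ∧ ¬ Function.Bijective σ ∧ x = X.act σ y

/-- A symmetric subset (subfunctor) of `X`. -/
structure SymSubset (X : SymSet) where
  carrier : ∀ n : ℕ, Set (X.obj n)
  act_mem : ∀ {m n : ℕ} (α : Fin (m + 1) → Fin (n + 1)) {x : X.obj n},
    x ∈ carrier n → X.act α x ∈ carrier m

/-- `X` is `n`-skeletal: the smallest symmetric subset of `X` containing all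
of its `n`-simplices is all of `X`. -/
def IsSkeletal (X : SymSet) (n : ℕ) : Prop :=
  ∀ Y : SymSubset X, (∀ x : X.obj n, x ∈ Y.carrier n) →
    ∀ (m : ℕ) (x : X.obj m), x ∈ Y.carrier m

/-- `X` has dimension `n`: it is `n`-skeletal but not `k`-skeletal for `k < n`
(for `n ≥ 1` this is equivalent to not being `(n-1)`-skeletal). -/
def HasDim (X : SymSet) (n : ℕ) : Prop :=
  X.IsSkeletal n ∧ ∀ k : ℕ, k < n → ¬ X.IsSkeletal k

/-- Two objects are related if there is an edge between them (in either direction). -/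
def EdgeRel (X : SymSet) (a b : X.obj 0) : Prop :=
  ∃ f : X.obj 1, (X.edgeDom f = a ∧ X.edgeCod f = b) ∨ (X.edgeDom f = b ∧ X.edgeCod f = a)

/-- `X` is connected: it is nonempty and any two objects are joined by a
zig-zag of edges. -/
def Connected (X : SymSet) : Prop :=
  Nonempty (X.obj 0) ∧ ∀ a b : X.obj 0, Relation.ReflTransGen X.EdgeRel a b

/-- `n_a`: the number of nonidentity edges with domain `a`. -/
noncomputable def nEdges (X : SymSet) (a : X.obj 0) : ℕ :=
  Nat.card { f : X.obj 1 // X.edgeDom f = a ∧ ¬ X.IsIdentityEdge f }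

/-- `p(X)`: the maximum of the `n_a` over all objects `a`. -/
noncomputable def pVal (X : SymSet) : ℕ := ⨆ a : X.obj 0, X.nEdges a

/-- A map of symmetric sets (a natural transformation). -/
structure SymMap (X Y : SymSet) where
  app : ∀ n : ℕ, X.obj n → Y.obj n
  naturality : ∀ {m n : ℕ} (α : Fin (m + 1) → Fin (n + 1)) (x : X.obj n),
    app m (X.act α x) = Y.act α (app n x)

/-- A map of symmetric sets is an isomorphism iff it is levelwise bijective. -/
def SymMap.IsIso {X Y : SymSet} (F : SymMap X Y) : Prop :=
  ∀ n : ℕ, Function.Bijective (F.app n)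

/-- `X` and `Y` are isomorphic symmetric sets. -/
def Isomorphic (X Y : SymSet) : Prop := ∃ F : SymMap X Y, F.IsIso

/-- The Bousfield–Segal map `𝓑_m : X_m → X_1^m`, `x ↦ (x_{01}, x_{02}, …, x_{0m})`. -/
def bousfield (X : SymSet) {m : ℕ} (x : X.obj m) : Fin m → X.obj 1 :=
  fun i => X.edge 0 i.succ x

/-- `X` is spiny in degrees below `q`: `𝓔_T` is injective for every spine `T`
of `[n]` for each `1 ≤ n ≤ q`. -/
def SpinyBelow (X : SymSet) (q : ℕ) : Prop :=
  ∀ n : ℕ, 1 ≤ n → n ≤ q → ∀ T : SimpleGraph (Fin (n + 1)), T.IsTree →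
    Function.Injective (X.spineMap T)

/-- `X` is a groupoid: `𝓔_T : X_n → lim_T X` is a bijection for every `n ≥ 1`
and every spine `T` of `[n]`. -/
def IsGroupoid (X : SymSet) : Prop :=
  ∀ n : ℕ, 1 ≤ n → ∀ T : SimpleGraph (Fin (n + 1)), T.IsTree →
    Function.Bijective (X.spineMap T)

/-- `X` is reduced: `X_0` is a singleton. -/
def Reduced (X : SymSet) : Prop := Nonempty (X.obj 0) ∧ Subsingleton (X.obj 0)

/-- A partial group is a reduced spiny symmetric set. -/
def IsPartialGroup (X : SymSet) : Prop := X.Reduced ∧ X.Spiny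

/-- The levelwise product of two symmetric sets. -/
def prod (X Y : SymSet) : SymSet where
  obj n := X.obj n × Y.obj n
  act α p := (X.act α p.1, Y.act α p.2)
  act_id p := by cases p with | mk a b => simp only [X.act_id, Y.act_id]
  act_comp α β p := by cases p with | mk a b => simp only [X.act_comp, Y.act_comp]

end SymSet

-- On `Fin 3`, `starGraph 1` is the path spine `0 - 1 - 2` and `starGraph 0` the spine `1 - 0 - 2`.
lemma SimpleGraph.starGraph_castSucc_adj_iff (r : Fin 2) {i j : Fin 3} (hij : i < j) :
    (starGraph r.castSucc).Adj i j ↔ (i = 0 ∧ j = 1) ∨ (i = r.castSucc ∧ j = 2) := by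
  fin_cases r <;> fin_cases i <;> fin_cases j <;> simp_all

namespace SymSet

variable {X : SymSet}

def vertex {n : ℕ} (i : Fin (n + 1)) (x : X.obj n) : X.obj 0 :=
  X.act (fun _ : Fin 1 => i) x

abbrev Hom (X : SymSet) (a b : X.obj 0) : Type :=
  {f : X.obj 1 // X.edgeDom f = a ∧ X.edgeCod f = b}

lemma vertex_act {m n : ℕ} (α : Fin (m + 1) → Fin (n + 1)) (i : Fin (m + 1)) (x : X.obj n) :
    vertex i (X.act α x) = vertex (α i) x :=
  X.act_comp _ _ _

@[simp]
lemma edgeDom_edge {n : ℕ} (i j : Fin (n + 1)) (x : X.obj n) :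
    X.edgeDom (X.edge i j x) = vertex i x :=
  vertex_act _ 0 x

@[simp]
lemma edgeCod_edge {n : ℕ} (i j : Fin (n + 1)) (x : X.obj n) :
    X.edgeCod (X.edge i j x) = vertex j x :=
  vertex_act _ 1 x

lemma vertex_zero_eq_self (a : X.obj 0) : vertex 0 a = a := by
  unfold vertex
  convert X.act_id a using 2
  exact funext fun _ => Subsingleton.elim (α := Fin 1) _ _

lemma vertex_identityEdge (i : Fin 2) (a : X.obj 0) : vertex i (X.identityEdge a) = a := by
  rw [identityEdge, vertex_act, vertex_zero_eq_self]

@[simp]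
lemma edgeDom_identityEdge (a : X.obj 0) : X.edgeDom (X.identityEdge a) = a :=
  vertex_identityEdge 0 a

@[simp]
lemma edgeCod_identityEdge (a : X.obj 0) : X.edgeCod (X.identityEdge a) = a :=
  vertex_identityEdge 1 a

lemma identityEdge_injective : Function.Injective X.identityEdge :=
  Function.LeftInverse.injective edgeDom_identityEdge

lemma edge_one_zero_involutive : Function.Involutive (X.edge (1 : Fin 2) 0) := by
  intro f
  rw [edge, edge, X.act_comp]
  convert X.act_id f
  funext t
  fin_cases t <;> rfl

def homReverse {a b : X.obj 0} (f : X.Hom a b) : X.Hom b a :=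
  ⟨X.edge 1 0 f.1, (edgeDom_edge 1 0 f.1).trans f.2.2, (edgeCod_edge 1 0 f.1).trans f.2.1⟩

lemma card_hom_comm (a b : X.obj 0) : Nat.card (X.Hom a b) = Nat.card (X.Hom b a) :=
  Nat.card_congr ⟨homReverse, homReverse, fun f => Subtype.ext (edge_one_zero_involutive f.1),
    fun f => Subtype.ext (edge_one_zero_involutive f.1)⟩

lemma vertex_edge_zero_one (r : Fin 2) (z : X.obj 2) :
    vertex r (X.edge 0 1 z) = vertex r.castSucc z := by
  rw [edge, vertex_act]
  fin_cases r <;> rfl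

namespace IsGroupoid

theorem eq_of_forall_edge_eq (hX : X.IsGroupoid) {n : ℕ} (hn : 1 ≤ n)
    {T : SimpleGraph (Fin (n + 1))} (hT : T.IsTree) {x y : X.obj n}
    (h : ∀ i j, i < j → T.Adj i j → X.edge i j x = X.edge i j y) : x = y := by
  refine (hX n hn T hT).1 (Subtype.ext ?_)
  funext i j hlt hadj
  exact h i j hlt hadj

theorem exists_forall_edge_eq (hX : X.IsGroupoid) {n : ℕ} (hn : 1 ≤ n)
    {T : SimpleGraph (Fin (n + 1))} (hT : T.IsTree)
    {e : ∀ i j : Fin (n + 1), i < j → T.Adj i j → X.obj 1}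
    (he : X.IsSpineLim T e) : ∃ x, ∀ i j hlt hadj, X.edge i j x = e i j hlt hadj := by
  obtain ⟨x, hx⟩ := (hX n hn T hT).2 ⟨e, he⟩
  exact ⟨x, fun i j hlt hadj => congrArg (fun s => s.1 i j hlt hadj) hx⟩

theorem eq_of_edge_eq_of_edge_eq (hX : X.IsGroupoid) (r : Fin 2) {x y : X.obj 2}
    (h01 : X.edge 0 1 x = X.edge 0 1 y) (h2 : X.edge r.castSucc 2 x = X.edge r.castSucc 2 y) :
    x = y := by
  refine hX.eq_of_forall_edge_eq (by norm_num) (SimpleGraph.isTree_starGraph r.castSucc) ?_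
  intro i j hij hadj
  obtain ⟨rfl, rfl⟩ | ⟨rfl, rfl⟩ := (SimpleGraph.starGraph_castSucc_adj_iff r hij).1 hadj
  exacts [h01, h2]

theorem exists_edge_eq_of_vertex_eq (hX : X.IsGroupoid) (r : Fin 2) {f g : X.obj 1}
    (h : vertex r f = X.edgeDom g) :
    ∃ z : X.obj 2, X.edge 0 1 z = f ∧ X.edge r.castSucc 2 z = g := by
  have hlim : X.IsSpineLim (SimpleGraph.starGraph r.castSucc)
      (fun _ j _ _ => if j = 1 then f else g) := by
    refine ⟨![X.edgeDom f, X.edgeCod f, X.edgeCod g], fun i j hij hadj => ?_⟩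
    obtain ⟨rfl, rfl⟩ | ⟨rfl, rfl⟩ := (SimpleGraph.starGraph_castSucc_adj_iff r hij).1 hadj
    · simp
    · fin_cases r <;> exact ⟨h.symm, rfl⟩
  obtain ⟨z, hz⟩ := hX.exists_forall_edge_eq (by norm_num)
    (SimpleGraph.isTree_starGraph r.castSucc) hlim
  exact ⟨z, hz 0 1 (by decide)
    ((SimpleGraph.starGraph_castSucc_adj_iff r (by decide)).2 (.inl ⟨rfl, rfl⟩)), by
    simpa using hz r.castSucc 2 (by fin_cases r <;> decide)
      (SimpleGraph.starGraph_center_adj (by fin_cases r <;> decide))⟩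

theorem card_hom_vertex (hX : X.IsGroupoid) (r : Fin 2) (g : X.obj 1) (c : X.obj 0) :
    Nat.card (X.Hom (vertex r g) c) =
      Nat.card {z : X.obj 2 // X.edge 0 1 z = g ∧ vertex 2 z = c} := by
  refine (Nat.card_eq_of_bijective (fun z => ⟨X.edge r.castSucc 2 z.1,
    by rw [edgeDom_edge, ← vertex_edge_zero_one, z.2.1], by rw [edgeCod_edge, z.2.2]⟩)
    ⟨?_, ?_⟩).symm
  · rintro ⟨z, hz⟩ ⟨w, hw⟩ h
    exact Subtype.ext
      (hX.eq_of_edge_eq_of_edge_eq r (hz.1.trans hw.1.symm) (congrArg Subtype.val h))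
  · rintro ⟨k, hk, hkc⟩
    obtain ⟨z, hz, hzk⟩ := hX.exists_edge_eq_of_vertex_eq r hk.symm
    refine ⟨⟨z, hz, ?_⟩, Subtype.ext hzk⟩
    rw [← edgeCod_edge r.castSucc, hzk, hkc]

theorem card_hom_edgeDom (hX : X.IsGroupoid) (g : X.obj 1) (c : X.obj 0) :
    Nat.card (X.Hom (X.edgeDom g) c) = Nat.card (X.Hom (X.edgeCod g) c) :=
  (hX.card_hom_vertex 0 g c).trans (hX.card_hom_vertex 1 g c).symm

theorem card_hom_eq_of_edgeRel (hX : X.IsGroupoid) {a b : X.obj 0} (h : X.EdgeRel a b)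
    (c : X.obj 0) : Nat.card (X.Hom a c) = Nat.card (X.Hom b c) := by
  obtain ⟨g, ⟨rfl, rfl⟩ | ⟨rfl, rfl⟩⟩ := h
  · exact hX.card_hom_edgeDom g c
  · exact (hX.card_hom_edgeDom g c).symm

theorem card_hom_eq_card_hom (hX : X.IsGroupoid)
    (hconn : ∀ a b : X.obj 0, Relation.ReflTransGen X.EdgeRel a b) (a b c d : X.obj 0) :
    Nat.card (X.Hom a b) = Nat.card (X.Hom c d) := by
  have hsrc : ∀ a c b : X.obj 0, Nat.card (X.Hom a b) = Nat.card (X.Hom c b) := by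
    intro a c b
    induction hconn a c with
    | refl => rfl
    | tail _ hrel ih => exact ih.trans (hX.card_hom_eq_of_edgeRel hrel b)
  calc Nat.card (X.Hom a b)
      = Nat.card (X.Hom c b) := hsrc a c b
    _ = Nat.card (X.Hom b c) := card_hom_comm c b
    _ = Nat.card (X.Hom d c) := hsrc b d c
    _ = Nat.card (X.Hom c d) := card_hom_comm d c

end IsGroupoid

lemma isIdentityEdge_iff {f : X.obj 1} :
    X.IsIdentityEdge f ↔ f = X.identityEdge (X.edgeDom f) := by
  refine ⟨?_, fun h => ⟨_, h⟩⟩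
  rintro ⟨a, rfl⟩
  rw [edgeDom_identityEdge]

lemma nEdges_add_one [Finite (X.obj 1)] (a : X.obj 0) :
    X.nEdges a + 1 = Nat.card {f : X.obj 1 // X.edgeDom f = a} := by
  have hset : {f | X.edgeDom f = a ∧ ¬ X.IsIdentityEdge f} =
      {f | X.edgeDom f = a} \ {X.identityEdge a} := by
    ext f
    simp only [Set.mem_ofPred_eq, Set.mem_sdiff, Set.mem_singleton_iff, isIdentityEdge_iff]
    constructor <;> rintro ⟨rfl, h⟩ <;> exact ⟨rfl, h⟩
  change Nat.card ({f | X.edgeDom f = a ∧ ¬ X.IsIdentityEdge f} : Set (X.obj 1)) + 1 =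
    Nat.card ({f | X.edgeDom f = a} : Set (X.obj 1))
  rw [Nat.card_coe_set_eq, Nat.card_coe_set_eq, hset]
  exact Set.ncard_sdiff_singleton_add_one (edgeDom_identityEdge a)

lemma card_edgeDom_eq_mul [Finite (X.obj 1)] (a : X.obj 0) {k : ℕ}
    (hk : ∀ c, Nat.card (X.Hom a c) = k) :
    Nat.card {f : X.obj 1 // X.edgeDom f = a} = k * Nat.card (X.obj 0) := by
  have : Finite (X.obj 0) := Finite.of_injective _ identityEdge_injective
  have := Fintype.ofFinite (X.obj 0)
  calc Nat.card {f : X.obj 1 // X.edgeDom f = a}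
      = Nat.card (Σ c, {f : {f : X.obj 1 // X.edgeDom f = a} // X.edgeCod f.1 = c}) :=
        Nat.card_congr (Equiv.sigmaFiberEquiv _).symm
    _ = ∑ c, Nat.card (X.Hom a c) := by
        rw [Nat.card_sigma]
        exact Finset.sum_congr rfl fun c _ =>
          Nat.card_congr (Equiv.subtypeSubtypeEquivSubtypeInter _ (fun f => X.edgeCod f = c))
    _ = k * Nat.card (X.obj 0) := by
        simp [hk, Nat.card_eq_fintype_card, mul_comm]

end SymSet

/-- for a finite connected groupoid and any object `x`,
`p(X) + 1 = |hom(x,x)| × |X_0|`. -/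
theorem stmt9 (X : SymSet) (hX : X.IsGroupoid) (hfin : Finite (X.obj 1))
    (hconn : X.Connected) (x : X.obj 0) :
    X.pVal + 1 =
      Nat.card { f : X.obj 1 // X.edgeDom f = x ∧ X.edgeCod f = x } * Nat.card (X.obj 0) := by
  have hout : ∀ a, X.nEdges a + 1 = Nat.card (X.Hom x x) * Nat.card (X.obj 0) := fun a => by
    rw [X.nEdges_add_one a,
      X.card_edgeDom_eq_mul a fun c => hX.card_hom_eq_card_hom hconn.2 a c x x]
  have hconst : ∀ a, X.nEdges a = X.nEdges x :=
    fun a => Nat.add_right_cancel ((hout a).trans (hout x).symm)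
  have : Nonempty (X.obj 0) := hconn.1
  rw [SymSet.pVal, iSup_congr hconst, ciSup_const]
  exact hout x
end

section
/- If X is a partial group whose set X_1 of elements has exactly n + 1 elements, then X is n-skeletal. -/
/-!
Every `m`-simplex with `m ≤ n` is a face of an `n`-simplex, so only simplices of dimension
`m + 1 > n` need attention. For such an `x`, the `m + 2` edges `x_{0k}` cannot all be distinct
in the `(n + 1)`-element set `X_1`; say `x_{0i} = x_{0j}` with `j ≠ 0`. Spininess along the star
spine centred at `0` then gives `x = x · ρ`, where `ρ` sends `j` to `i` and fixes everything else.
Since `ρ` misses `j`, it factors through the coface `δ_j : [m] → [m + 1]`, so `x` is a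
degeneracy of its face `x · δ_j`, and induction on the dimension finishes the proof.
-/

namespace SymSet

variable (X : SymSet)

lemma edge_act {m n : ℕ} (α : Fin (m + 1) → Fin (n + 1)) (i j : Fin (m + 1)) (x : X.obj n) :
    X.edge i j (X.act α x) = X.edge (α i) (α j) x := by
  unfold edge
  rw [X.act_comp]
  congr 1
  funext t
  by_cases h : t = 0 <;> simp [h]

variable {X} in
lemma SymSubset.mem_of_le {Y : X.SymSubset} {n : ℕ} (hY : ∀ x : X.obj n, x ∈ Y.carrier n)
    {m : ℕ} (hmn : m ≤ n) (x : X.obj m) : x ∈ Y.carrier m := by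
  have hinj : Function.Injective (Fin.castLE (Nat.succ_le_succ hmn)) := Fin.castLE_injective _
  rw [← X.act_id x, ← Function.invFun_comp hinj, ← X.act_comp]
  exact Y.act_mem _ (hY _)

lemma isSkeletal_of_forall_exists_act_eq (n : ℕ)
    (h : ∀ m, n ≤ m → ∀ x : X.obj (m + 1), ∃ (y : X.obj m) (σ : Fin (m + 2) → Fin (m + 1)),
      X.act σ y = x) :
    X.IsSkeletal n := by
  intro Y hY m
  rcases le_total m n with hmn | hnm
  · exact Y.mem_of_le hY hmn
  induction m, hnm using Nat.le_induction with
  | base => exact hY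
  | succ m hnm ih =>
    intro x
    obtain ⟨y, σ, rfl⟩ := h m hnm x
    exact Y.act_mem σ (ih y)

lemma exists_act_eq_of_act_eq_self {m : ℕ} {x : X.obj (m + 1)} {α : Fin (m + 2) → Fin (m + 2)}
    {j : Fin (m + 2)} (hα : ∀ k, α k ≠ j) (hx : X.act α x = x) :
    ∃ (y : X.obj m) (σ : Fin (m + 2) → Fin (m + 1)), X.act σ y = x := by
  choose σ hσ using fun k => Fin.exists_succAbove_eq (hα k)
  refine ⟨X.act j.succAbove x, σ, ?_⟩
  rw [X.act_comp, show j.succAbove ∘ σ = α from funext hσ, hx]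

lemma exists_ne_edge_zero_eq [Finite (X.obj 1)] {m : ℕ} (hm : Nat.card (X.obj 1) ≤ m)
    (x : X.obj m) : ∃ i j : Fin (m + 1), i ≠ j ∧ X.edge 0 i x = X.edge 0 j x := by
  have hinj : ¬ Function.Injective fun k : Fin (m + 1) => X.edge 0 k x := fun hinj => by
    have := Nat.card_le_card_of_injective _ hinj
    rw [Nat.card_eq_fintype_card, Fintype.card_fin] at this
    omega
  obtain ⟨i, j, h, hij⟩ := Function.not_injective_iff.1 hinj
  exact ⟨i, j, hij, h⟩

namespace Spiny

variable {X}

lemma eq_of_edge_zero_eq (hX : X.Spiny) {m : ℕ} {x y : X.obj (m + 1)}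
    (h : ∀ k, X.edge 0 k x = X.edge 0 k y) : x = y := by
  refine hX (m + 1) m.succ_pos _ (SimpleGraph.isTree_starGraph 0) (Subtype.ext ?_)
  funext i j hij hadj
  have hi : i = 0 := ((SimpleGraph.starGraph_adj.1 hadj).2.resolve_right (Fin.ne_zero_of_lt hij))
  subst hi
  exact h j

lemma act_update_eq_self (hX : X.Spiny) {m : ℕ} {x : X.obj (m + 1)} {i j : Fin (m + 2)}
    (hj : j ≠ 0) (h : X.edge 0 i x = X.edge 0 j x) : X.act (Function.update id j i) x = x := by
  refine hX.eq_of_edge_zero_eq fun k => ?_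
  rw [edge_act, Function.update_of_ne hj.symm]
  by_cases hk : k = j
  · subst hk
    simpa using h
  · simp [Function.update_of_ne hk]

lemma exists_act_eq_of_edge_zero_eq (hX : X.Spiny) {m : ℕ} {x : X.obj (m + 1)}
    {i j : Fin (m + 2)} (hij : i ≠ j) (h : X.edge 0 i x = X.edge 0 j x) :
    ∃ (y : X.obj m) (σ : Fin (m + 2) → Fin (m + 1)), X.act σ y = x := by
  wlog hj : j ≠ 0 generalizing i j
  · exact this hij.symm h.symm (by rintro rfl; exact hj hij.symm)
  refine X.exists_act_eq_of_act_eq_self (j := j) (fun k => ?_) (hX.act_update_eq_self hj h)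
  by_cases hk : k = j
  · simpa [hk] using hij
  · simpa [Function.update_of_ne hk] using hk

end Spiny

end SymSet

/-- a partial group with `n + 1` elements is `n`-skeletal. -/
theorem stmt10 (X : SymSet) (hX : X.IsPartialGroup) (n : ℕ)
    (hcard : Nat.card (X.obj 1) = n + 1) : X.IsSkeletal n := by
  have : Finite (X.obj 1) := Nat.finite_of_card_ne_zero (by omega)
  refine X.isSkeletal_of_forall_exists_act_eq n fun m hm x => ?_
  obtain ⟨i, j, hij, h⟩ := X.exists_ne_edge_zero_eq (by omega) x
  exact hX.2.exists_act_eq_of_edge_zero_eq hij h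
end

section
/- If X is a group with n + 1 elements, regarded as a symmetric set (a reduced symmetric set, X_0 a singleton, for which 𝓔_T is a bijection for every spine T of every [m], with |X_1| = n + 1), then X has dimension n. -/
/-!
By the star spine, an `m`-simplex `x` of a group `X` is determined by its row of edges
`x_{00}, x_{01}, …, x_{0m}`, and every row whose first entry is the identity occurs. Enumerate
`X_1` as `e 0, …, e n` with `e 0` the identity and let `u ∈ X_n` be the simplex with row
`e 0, …, e n`. Then every `x ∈ X_m` equals `u · α` for `α i = e⁻¹(x_{0i})`, so `X` is
`n`-skeletal. Conversely, if `u = y · α` with `y ∈ X_k`, then `u_{0i}` depends only on `α i`;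
as the row of `u` has no repetitions, `α : [n] → [k]` is injective and `k ≥ n`.
-/

lemma exists_finEquiv_apply_zero {α : Type*} {n : ℕ} (hcard : Nat.card α = n + 1) (a : α) :
    ∃ e : Fin (n + 1) ≃ α, e 0 = a := by
  have : Finite α := Nat.finite_of_card_ne_zero (by omega)
  let e₀ := (Finite.equivFinOfCardEq hcard).symm
  exact ⟨(Equiv.swap 0 (e₀.symm a)).trans e₀, by simp⟩

namespace SymSet

variable (X : SymSet)

lemma isIdentityEdge_edge_self {m : ℕ} (i : Fin (m + 1)) (x : X.obj m) :
    X.IsIdentityEdge (X.edge i i x) := by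
  refine ⟨X.act (fun _ : Fin 1 => i) x, ?_⟩
  unfold edge identityEdge
  rw [X.act_comp]
  congr 1
  funext t
  simp

variable {X}

lemma Reduced.eq_of_isIdentityEdge (hred : X.Reduced) {f g : X.obj 1}
    (hf : X.IsIdentityEdge f) (hg : X.IsIdentityEdge g) : f = g := by
  obtain ⟨a, rfl⟩ := hf
  obtain ⟨b, rfl⟩ := hg
  rw [@Subsingleton.elim _ hred.2 a b]

lemma edge_zero_injective (hred : X.Reduced) (hgrp : X.IsGroupoid) (m : ℕ) :
    Function.Injective fun (x : X.obj m) (i : Fin (m + 1)) => X.edge 0 i x := by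
  intro x x' hxx'
  rcases m with _ | m
  · exact @Subsingleton.elim _ hred.2 x x'
  apply (hgrp (m + 1) le_add_self _ (SimpleGraph.isTree_starGraph 0)).1
  apply Subtype.ext
  funext i j hij hadj
  obtain rfl : i = 0 :=
    (SimpleGraph.starGraph_adj.1 hadj).2.resolve_right fun hj => absurd hij (by simp [hj])
  exact congrFun hxx' j

lemma exists_edge_zero_eq (hred : X.Reduced) (hgrp : X.IsGroupoid) {m : ℕ}
    (f : Fin (m + 1) → X.obj 1) (hf : X.IsIdentityEdge (f 0)) :
    ∃ x : X.obj m, ∀ i, X.edge 0 i x = f i := by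
  have : Subsingleton (X.obj 0) := hred.2
  obtain ⟨x, hx⟩ : ∃ x : X.obj m, ∀ i, i ≠ 0 → X.edge 0 i x = f i := by
    rcases m with _ | m
    · exact ⟨hred.1.some, fun i hi => absurd (Fin.fin_one_eq_zero i) hi⟩
    obtain ⟨x, hx⟩ := (hgrp (m + 1) le_add_self _ (SimpleGraph.isTree_starGraph 0)).2
      ⟨fun _ j _ _ => f j, fun _ => hred.1.some,
        fun _ _ _ _ => ⟨Subsingleton.elim _ _, Subsingleton.elim _ _⟩⟩
    refine ⟨x, fun i hi => ?_⟩
    have hspine := congrArg Subtype.val hx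
    exact congrFun (congrFun (congrFun (congrFun hspine 0) i) (Fin.pos_iff_ne_zero.2 hi))
      (SimpleGraph.starGraph_center_adj hi.symm)
  refine ⟨x, fun i => ?_⟩
  rcases eq_or_ne i 0 with rfl | hi
  · exact hred.eq_of_isIdentityEdge (X.isIdentityEdge_edge_self 0 x) hf
  · exact hx i hi

variable (X) in
/-- `sk_k X`, described explicitly as the images of the `k`-simplices. -/
def skeleton (k : ℕ) : SymSubset X where
  carrier m := {x | ∃ (α : Fin (m + 1) → Fin (k + 1)) (y : X.obj k), x = X.act α y}
  act_mem β := by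
    rintro x ⟨α, y, rfl⟩
    exact ⟨α ∘ β, y, X.act_comp β α y⟩

lemma isSkeletal_iff {k : ℕ} :
    X.IsSkeletal k ↔ ∀ m (x : X.obj m), ∃ (α : Fin (m + 1) → Fin (k + 1)) (y : X.obj k),
      x = X.act α y := by
  refine ⟨fun h m x => h (X.skeleton k) (fun y => ⟨id, y, (X.act_id y).symm⟩) m x, ?_⟩
  rintro h Y hY m x
  obtain ⟨α, y, rfl⟩ := h m x
  exact Y.act_mem α (hY y)

lemma eq_act_of_edge_zero_eq (hred : X.Reduced) (hgrp : X.IsGroupoid) {n : ℕ}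
    {e : Fin (n + 1) ≃ X.obj 1} {u : X.obj n} (hu : ∀ i, X.edge 0 i u = e i)
    {m : ℕ} (x : X.obj m) : x = X.act (fun i => e.symm (X.edge 0 i x)) u := by
  have h0 : e.symm (X.edge 0 0 x) = 0 := by
    rw [e.symm_apply_eq, ← hu]
    exact hred.eq_of_isIdentityEdge (X.isIdentityEdge_edge_self 0 x)
      (X.isIdentityEdge_edge_self 0 u)
  apply edge_zero_injective hred hgrp m
  funext i
  simp only [edge_act, h0, hu, e.apply_symm_apply]

lemma injective_of_eq_act {n k : ℕ} {u : X.obj n}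
    (hu : Function.Injective fun i => X.edge 0 i u) {α : Fin (n + 1) → Fin (k + 1)}
    {y : X.obj k} (huy : u = X.act α y) : Function.Injective α := by
  intro i j hij
  apply hu
  simp only [huy, edge_act, hij]

end SymSet

/-- a group with `n + 1` elements (a reduced symmetric set with all
`𝓔_T` bijective), regarded as a symmetric set, has dimension `n`. -/
theorem stmt11 (X : SymSet) (hred : X.Reduced) (hgrp : X.IsGroupoid) (n : ℕ)
    (hcard : Nat.card (X.obj 1) = n + 1) : X.HasDim n := by
  obtain ⟨e, he⟩ := exists_finEquiv_apply_zero hcard (X.identityEdge hred.1.some)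
  obtain ⟨u, hu⟩ := SymSet.exists_edge_zero_eq hred hgrp e ⟨_, he⟩
  refine ⟨SymSet.isSkeletal_iff.2 fun m x => ⟨_, u, SymSet.eq_act_of_edge_zero_eq hred hgrp hu x⟩,
    fun k hk hsk => ?_⟩
  obtain ⟨α, y, huy⟩ := SymSet.isSkeletal_iff.1 hsk n u
  have hrow : Function.Injective fun i => X.edge 0 i u := by
    simpa only [hu] using e.injective
  have := Fin.le_of_injective α (SymSet.injective_of_eq_act hrow huy)
  omega
end

section
/- (Eilenberg–Zilber lemma for symmetric sets.) Let X be a symmetric simplicial set and x ∈ X_m. Then there exist k, a nondegenerate element y ∈ X_k, and a surjection σ : [m] → [k] with x = y·σ. Moreover this pair is essentially unique: if y' ∈ X_{k'} is nondegenerate and σ' : [m] → [k'] is a surjection with x = y'·σ', then k = k' and there is a unique automorphism α of [k] with y = y'·α and α∘σ = σ'. -/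
/-!
A simplex of minimal dimension among those `x` factors through is nondegenerate. If
`x = y·σ = y'·σ'` and `s` is a section of `σ`, then `y = y'·(σ' ∘ s)`, and `σ' ∘ s` is injective
because `y` is nondegenerate (otherwise `y` would factor through the image of `σ' ∘ s`); by
symmetry `k = k'`, so every such `σ' ∘ s` is a bijection. Then `α := σ' ∘ s` satisfies
`α ∘ σ = σ'`: the bijections `σ' ∘ s` and `σ' ∘ s_a`, where the section `s_a` sends `σ a` to `a`,
agree away from `σ a`, hence also at `σ a`.
-/

theorem Function.exists_fin_surjective_injective_comp_eq {α β : Type*} [Finite α] [Nonempty α]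
    (f : α → β) :
    ∃ (j : ℕ) (ρ : α → Fin (j + 1)) (ι : Fin (j + 1) → β),
      Function.Surjective ρ ∧ Function.Injective ι ∧ ι ∘ ρ = f := by
  have hcard : Nat.card (Set.range f) = Nat.card (Set.range f) - 1 + 1 :=
    (Nat.sub_add_cancel Nat.card_pos).symm
  let e : Set.range f ≃ Fin (Nat.card (Set.range f) - 1 + 1) :=
    (Finite.equivFin _).trans (finCongr hcard)
  refine ⟨_, e ∘ Set.rangeFactorization f, Subtype.val ∘ e.symm,
    e.surjective.comp Set.rangeFactorization_surjective,
    Subtype.val_injective.comp e.symm.injective, ?_⟩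
  funext a
  simp only [Function.comp_apply, Equiv.symm_apply_apply, Set.rangeFactorization_coe]

theorem Function.apply_eq_of_forall_ne {α β : Type*} {f g : α → β}
    (hf : Function.Surjective f) (hg : Function.Injective g) (p : α)
    (h : ∀ q, q ≠ p → f q = g q) : f p = g p := by
  obtain ⟨q, hq⟩ := hf (g p)
  obtain rfl | hqp := eq_or_ne q p
  · exact hq
  · exact absurd (hg ((h q hqp).symm.trans hq)) hqp

theorem Function.rightInverse_update_surjInv {α β : Type*} [DecidableEq β] {σ : α → β}
    (hσ : Function.Surjective σ) (a : α) :
    Function.RightInverse (Function.update (Function.surjInv hσ) (σ a) a) σ := by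
  intro b
  obtain rfl | hb := eq_or_ne b (σ a)
  · rw [Function.update_self]
  · rw [Function.update_of_ne hb, Function.surjInv_eq hσ]

namespace SymSet

theorem Degenerate.exists_lt {X : SymSet} {n : ℕ} {y : X.obj n} (hy : X.Degenerate y) :
    ∃ j < n, ∃ (τ : Fin (n + 1) → Fin (j + 1)) (z : X.obj j),
      Function.Surjective τ ∧ y = X.act τ z := by
  obtain ⟨j, τ, z, hτ, hτb, rfl⟩ := hy
  have hlt := Fintype.card_lt_of_surjective_not_injective τ hτ fun hτi => hτb ⟨hτi, hτ⟩
  simp only [Fintype.card_fin, Nat.add_lt_add_iff_right] at hlt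
  exact ⟨j, hlt, τ, z, hτ, rfl⟩

variable (X : SymSet)

theorem injective_of_eq_act_s17 {k k' : ℕ} {y : X.obj k} {y' : X.obj k'}
    {τ : Fin (k + 1) → Fin (k' + 1)} (hy : ¬ X.Degenerate y) (h : y = X.act τ y') :
    Function.Injective τ := by
  obtain ⟨j, ρ, ι, hρ, hι, rfl⟩ := Function.exists_fin_surjective_injective_comp_eq τ
  by_contra hτ
  have hρ_inj : ¬ Function.Injective ρ := fun hρi => hτ (hι.comp hρi)
  exact hy ⟨j, ρ, X.act ι y', hρ, fun hρb => hρ_inj hρb.injective, by rw [X.act_comp, h]⟩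

theorem eq_act_comp_of_act_eq_act {m k k' : ℕ} {σ : Fin (m + 1) → Fin (k + 1)}
    {σ' : Fin (m + 1) → Fin (k' + 1)} {y : X.obj k} {y' : X.obj k'}
    (h : X.act σ y = X.act σ' y') {s : Fin (k + 1) → Fin (m + 1)}
    (hs : Function.RightInverse s σ) :
    y = X.act (σ' ∘ s) y' := by
  rw [← X.act_comp, ← h, X.act_comp, hs.comp_eq_id, X.act_id]

theorem exists_nondegenerate_act_eq {m : ℕ} (x : X.obj m) :
    ∃ (k : ℕ) (σ : Fin (m + 1) → Fin (k + 1)) (y : X.obj k),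
      Function.Surjective σ ∧ ¬ X.Degenerate y ∧ x = X.act σ y := by
  classical
  have hex : ∃ k, ∃ (σ : Fin (m + 1) → Fin (k + 1)) (y : X.obj k),
      Function.Surjective σ ∧ x = X.act σ y :=
    ⟨m, id, x, Function.surjective_id, (X.act_id x).symm⟩
  obtain ⟨σ, y, hσ, hx⟩ := Nat.find_spec hex
  refine ⟨_, σ, y, hσ, fun hy => ?_, hx⟩
  obtain ⟨j, hj, τ, z, hτ, rfl⟩ := hy.exists_lt
  exact Nat.find_min hex hj ⟨τ ∘ σ, z, hτ.comp hσ, hx.trans (X.act_comp σ τ z)⟩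

theorem le_of_act_eq_act {m k k' : ℕ} {σ : Fin (m + 1) → Fin (k + 1)}
    {σ' : Fin (m + 1) → Fin (k' + 1)} {y : X.obj k} {y' : X.obj k'}
    (hσ : Function.Surjective σ) (hy : ¬ X.Degenerate y) (h : X.act σ y = X.act σ' y') :
    k ≤ k' := by
  have hinj := X.injective_of_eq_act_s17 hy
    (X.eq_act_comp_of_act_eq_act h (Function.rightInverse_surjInv hσ))
  simpa using Fin.le_of_injective _ hinj

theorem bijective_comp_of_act_eq_act {m k : ℕ} {σ σ' : Fin (m + 1) → Fin (k + 1)}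
    {y y' : X.obj k} (hy : ¬ X.Degenerate y) (h : X.act σ y = X.act σ' y')
    {s : Fin (k + 1) → Fin (m + 1)} (hs : Function.RightInverse s σ) :
    Function.Bijective (σ' ∘ s) :=
  Finite.injective_iff_bijective.mp (X.injective_of_eq_act_s17 hy (X.eq_act_comp_of_act_eq_act h hs))

theorem comp_surjInv_comp_eq_of_act_eq_act {m k : ℕ} {σ σ' : Fin (m + 1) → Fin (k + 1)}
    {y y' : X.obj k} (hσ : Function.Surjective σ) (hy : ¬ X.Degenerate y)
    (h : X.act σ y = X.act σ' y') :
    σ' ∘ Function.surjInv hσ ∘ σ = σ' := by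
  classical
  funext a
  have key := Function.apply_eq_of_forall_ne
    (X.bijective_comp_of_act_eq_act hy h (Function.rightInverse_surjInv hσ)).2
    (X.bijective_comp_of_act_eq_act hy h (Function.rightInverse_update_surjInv hσ a)).1 (σ a)
    fun b hb => by simp [Function.update_of_ne hb]
  simpa using key

end SymSet

/-- the Eilenberg–Zilber lemma for symmetric sets: every `x ∈ X_m` is
`y·σ` for a nondegenerate `y` and surjection `σ`, essentially uniquely. -/
theorem stmt17 (X : SymSet) (m : ℕ) (x : X.obj m) :
    (∃ (k : ℕ) (σ : Fin (m + 1) → Fin (k + 1)) (y : X.obj k),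
        Function.Surjective σ ∧ ¬ X.Degenerate y ∧ x = X.act σ y) ∧
    (∀ (k k' : ℕ) (σ : Fin (m + 1) → Fin (k + 1)) (σ' : Fin (m + 1) → Fin (k' + 1))
        (y : X.obj k) (y' : X.obj k'),
        Function.Surjective σ → ¬ X.Degenerate y → x = X.act σ y →
        Function.Surjective σ' → ¬ X.Degenerate y' → x = X.act σ' y' →
        k = k' ∧ ∃! α : Fin (k + 1) → Fin (k' + 1),
          Function.Bijective α ∧ y = X.act α y' ∧ α ∘ σ = σ') := by
  refine ⟨X.exists_nondegenerate_act_eq x, ?_⟩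
  rintro k k' σ σ' y y' hσ hy rfl hσ' hy' hx'
  obtain rfl : k = k' :=
    le_antisymm (X.le_of_act_eq_act hσ hy hx') (X.le_of_act_eq_act hσ' hy' hx'.symm)
  let s := Function.surjInv hσ
  have hs : Function.RightInverse s σ := Function.rightInverse_surjInv hσ
  have hα : (σ' ∘ s) ∘ σ = σ' := X.comp_surjInv_comp_eq_of_act_eq_act hσ hy hx'
  refine ⟨rfl, σ' ∘ s, ⟨X.bijective_comp_of_act_eq_act hy hx' hs,
    X.eq_act_comp_of_act_eq_act hx' hs, hα⟩, ?_⟩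
  rintro β ⟨-, -, hβ⟩
  exact hσ.injective_comp_right (hβ.trans hα.symm)
end
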